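/- The free group F_2 on generators {a, b} can be partitioned into countably many pairwise disjoint 5-large subsets, i.e., subsets P satisfying F_2 = F·P and F_2 = P·F' for some subsets F, F' of cardinality at most 4. -/

import Mathlib

open Pointwise Cardinal

/-!
Let `prefixCode a b g` be `j` when the reduced word of `g` begins with `a^j b`, and `0` otherwise.
Multiplying `g` on the left by `a^j b` or `a^j b a`, whichever causes no cancellation, makes its
prefix code `j` and leaves the prefix code of `g⁻¹` unchanged, because it only appends inverse
letters to the reduced word of `g⁻¹`. Feeding the two prefix codes of `g` and `g⁻¹` into a
symmetric function `pairCode` gives a label `symmCode g` with `symmCode g⁻¹ = symmCode g`, which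
one of four fixed words moves to any prescribed value `m`. Writing `W` for these four words,
`W⁻¹ · symmCode⁻¹{m}` and (by the inversion symmetry) `symmCode⁻¹{m} · W` are the whole group.
-/

section LargeSets

variable {G : Type*} [Group G]

theorem Set.inv_mul_eq_univ_of_forall_exists_mul_mem {W A : Set G}
    (h : ∀ g, ∃ w ∈ W, w * g ∈ A) : W⁻¹ * A = Set.univ := by
  refine Set.eq_univ_of_forall fun g => ?_
  obtain ⟨w, hw, hwg⟩ := h g
  exact ⟨w⁻¹, Set.inv_mem_inv.mpr hw, w * g, hwg, by group⟩

theorem Set.mul_eq_univ_of_forall_exists_mul_mem {W A : Set G} (hA : A⁻¹ = A)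
    (h : ∀ g, ∃ w ∈ W, w * g ∈ A) : A * W = Set.univ := by
  simpa [mul_inv_rev, hA] using congrArg Inv.inv (Set.inv_mul_eq_univ_of_forall_exists_mul_mem h)

end LargeSets

/-- On the block of rows `{2p, 2p + 1}` and columns `{2q, 2q + 1}` this is `max p q` on the
diagonal and `min p q` off it, so every row and every column of the block contains both `p`
and `q`. -/
def pairCode (i j : ℕ) : ℕ := if i % 2 = j % 2 then max (i / 2) (j / 2) else min (i / 2) (j / 2)

theorem pairCode_comm (i j : ℕ) : pairCode i j = pairCode j i := by
  unfold pairCode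
  split_ifs <;> omega

theorem exists_pairCode_eq (i m : ℕ) : ∃ k : Bool, pairCode i (2 * m + k.toNat) = m := by
  by_cases h : i / 2 ≤ m <;> rcases Nat.mod_two_eq_zero_or_one i with hi | hi <;>
    [use false; use true; use true; use false] <;>
    simp only [pairCode, Bool.toNat_false, Bool.toNat_true] <;> split_ifs <;> omega

namespace FreeGroup

variable {α : Type*}

theorem toWord_mk_mul [DecidableEq α] {L : List (α × Bool)} {x : FreeGroup α}
    (h : IsReduced (L ++ x.toWord)) : (mk L * x).toWord = L ++ x.toWord := by
  rw [← h.reduce_eq, ← toWord_mk, ← mul_mk, mk_toWord]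

theorem isReduced_of_forall_snd_eq {L : List (α × Bool)} {s : Bool} (h : ∀ x ∈ L, x.2 = s) :
    IsReduced L :=
  List.Pairwise.isChain <| List.pairwise_of_forall_mem_list
    (r := fun x y : α × Bool => x.1 = y.1 → x.2 = y.2) fun x hx y hy _ => (h x hx).trans (h y hy).symm

theorem snd_eq_false_of_mem_invRev {L : List (α × Bool)} (h : ∀ x ∈ L, x.2 = true)
    {x : α × Bool} (hx : x ∈ invRev L) : x.2 = false := by
  simp only [invRev, List.mem_reverse, List.mem_map] at hx
  obtain ⟨y, hy, rfl⟩ := hx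
  simp [h y hy]

section Codes

variable (a b : α)

def abWord (j : ℕ) (pad : Bool) : List (α × Bool) :=
  List.replicate j (a, true) ++ (b, true) :: if pad then [(a, true)] else []

theorem snd_eq_true_of_mem_abWord {j : ℕ} {pad : Bool} {x : α × Bool}
    (hx : x ∈ abWord a b j pad) : x.2 = true := by
  simp only [abWord, List.mem_append, List.mem_replicate, List.mem_cons] at hx
  split at hx <;> aesop

variable [DecidableEq α]

def leadingRun : List (α × Bool) → Option ℕ
  | [] => none
  | x :: L =>
    if x = (a, true) then (leadingRun L).map (· + 1) else if x = (b, true) then some 0 else none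

theorem leadingRun_replicate_append (hab : a ≠ b) (j : ℕ) (L : List (α × Bool)) :
    leadingRun a b (List.replicate j (a, true) ++ (b, true) :: L) = some j := by
  induction j with
  | zero => simp [leadingRun, hab.symm]
  | succ j ih => simp [leadingRun, List.replicate_succ, ih]

theorem leadingRun_append_of_forall_snd_eq_false {E : List (α × Bool)}
    (hE : ∀ x ∈ E, x.2 = false) (L : List (α × Bool)) :
    leadingRun a b (L ++ E) = leadingRun a b L := by
  induction L with
  | nil =>
    cases E with
    | nil => rfl
    | cons x E => simp [leadingRun, Prod.ext_iff, hE x List.mem_cons_self]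
  | cons x L ih => simp only [List.cons_append, leadingRun, ih]

def prefixCode (g : FreeGroup α) : ℕ := (leadingRun a b g.toWord).getD 0

theorem exists_isReduced_abWord_append (hab : a ≠ b) (j : ℕ) (g : FreeGroup α) :
    ∃ pad, IsReduced (abWord a b j pad ++ g.toWord) := by
  refine ⟨g.toWord.head? = some (b, false), List.isChain_append.mpr
    ⟨isReduced_of_forall_snd_eq fun _ => snd_eq_true_of_mem_abWord a b, isReduced_toWord,
      fun x hx y hy hxy => ?_⟩⟩
  by_cases hb : g.toWord.head? = some (b, false)
  · obtain rfl : x = (a, true) := by simpa [abWord, hb] using hx.symm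
    obtain rfl : y = (b, false) := by simpa [hb] using hy.symm
    exact absurd hxy hab
  · obtain rfl : x = (b, true) := by simpa [abWord, hb] using hx.symm
    obtain ⟨y₁, _ | _⟩ := y
    · obtain rfl : b = y₁ := hxy
      exact absurd hy hb
    · rfl

theorem exists_prefixCode_mk_abWord_mul (hab : a ≠ b) (j : ℕ) (g : FreeGroup α) :
    ∃ pad, prefixCode a b (mk (abWord a b j pad) * g) = j ∧
      prefixCode a b (mk (abWord a b j pad) * g)⁻¹ = prefixCode a b g⁻¹ := by
  obtain ⟨pad, hred⟩ := exists_isReduced_abWord_append a b hab j g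
  have hword := toWord_mk_mul hred
  refine ⟨pad, ?_, ?_⟩
  · rw [prefixCode, hword, abWord, List.append_assoc, List.cons_append,
      leadingRun_replicate_append a b hab]
    rfl
  · rw [prefixCode, prefixCode, toWord_inv, toWord_inv, hword, invRev_append,
      leadingRun_append_of_forall_snd_eq_false a b
        (fun _ => snd_eq_false_of_mem_invRev fun _ => snd_eq_true_of_mem_abWord a b)]

def symmCode (g : FreeGroup α) : ℕ := pairCode (prefixCode a b g⁻¹) (prefixCode a b g)

theorem symmCode_inv (g : FreeGroup α) : symmCode a b g⁻¹ = symmCode a b g := by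
  rw [symmCode, symmCode, inv_inv, pairCode_comm]

def codeWords (m : ℕ) : Set (FreeGroup α) :=
  Set.range fun p : Bool × Bool => mk (abWord a b (2 * m + p.1.toNat) p.2)

theorem exists_mem_codeWords_symmCode_mul (hab : a ≠ b) (m : ℕ) (g : FreeGroup α) :
    ∃ w ∈ codeWords a b m, symmCode a b (w * g) = m := by
  obtain ⟨k, hk⟩ := exists_pairCode_eq (prefixCode a b g⁻¹) m
  obtain ⟨pad, hcode, hcode_inv⟩ := exists_prefixCode_mk_abWord_mul a b hab (2 * m + k.toNat) g
  exact ⟨_, ⟨(k, pad), rfl⟩, by rw [symmCode, hcode, hcode_inv, hk]⟩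

end Codes

end FreeGroup

open FreeGroup in
theorem free_group_two_partition_five_large :
    ∃ P : ℕ → Set (FreeGroup (Fin 2)),
      Pairwise (Function.onFun Disjoint P) ∧
      (⋃ m, P m) = Set.univ ∧
      ∀ m, (∃ F : Set (FreeGroup (Fin 2)), #F ≤ 4 ∧ F * P m = Set.univ) ∧
           (∃ F' : Set (FreeGroup (Fin 2)), #F' ≤ 4 ∧ P m * F' = Set.univ) := by
  have hreach : ∀ m g, ∃ w ∈ codeWords 0 1 m, w * g ∈ symmCode (0 : Fin 2) 1 ⁻¹' {m} :=
    exists_mem_codeWords_symmCode_mul 0 1 (by decide)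
  have hsymm : ∀ m, (symmCode (0 : Fin 2) 1 ⁻¹' {m})⁻¹ = symmCode 0 1 ⁻¹' {m} := fun m => by
    ext g
    simp [symmCode_inv]
  have hcard : ∀ m, #(codeWords (0 : Fin 2) 1 m) ≤ 4 := fun m => mk_range_le.trans (by simp)
  refine ⟨fun m => symmCode 0 1 ⁻¹' {m}, pairwise_disjoint_fiber _,
    by rw [← Set.preimage_iUnion, Set.iUnion_of_singleton, Set.preimage_univ], fun m => ⟨?_, ?_⟩⟩
  · exact ⟨(codeWords 0 1 m)⁻¹, (mk_inv _).trans_le (hcard m),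
      Set.inv_mul_eq_univ_of_forall_exists_mul_mem (hreach m)⟩
  · exact ⟨codeWords 0 1 m, hcard m, Set.mul_eq_univ_of_forall_exists_mul_mem (hsymm m) (hreach m)⟩
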